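/- Let τ₁ and τ₂ be nonempty words over the positive integers. Then the multi-patterns τ₁-τ₂ and τ₂-τ₁ are equivalent; that is, for every finite set A of positive integers and all n, m ≥ 0, |C_{n;m}^A(τ₁-τ₂)| = |C_{n;m}^A(τ₂-τ₁)|. -/
import Mathlib

/-- A composition of `n` with `m` parts, all parts in `A`. -/
def IsCompOf (A : Finset ℕ) (n m : ℕ) (σ : List ℕ) : Prop :=
  (∀ x ∈ σ, x ∈ A) ∧ σ.sum = n ∧ σ.length = m

/-- The contiguous factor of `σ` of length `w.length` starting at position `i` is
order-isomorphic to the word `w`. -/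
def WordIsoAt (w σ : List ℕ) (i : ℕ) : Prop :=
  i + w.length ≤ σ.length ∧ ∀ s t : ℕ, s < w.length → t < w.length →
    (w.getD s 0 < w.getD t 0 ↔ σ.getD (i + s) 0 < σ.getD (i + t) 0)

/-- An occurrence of the multi-pattern `ws 0 - ws 1 - ⋯ - ws (s-1)` in `σ`:
contiguous factors, the `i`-th order-isomorphic to `ws i` and starting at `st i`,
each ending strictly before the next begins. -/
def MultiOccurs {s : ℕ} (ws : Fin s → List ℕ) (σ : List ℕ) : Prop :=
  ∃ st : Fin s → ℕ,
    (∀ i : Fin s, WordIsoAt (ws i) σ (st i)) ∧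
    ∀ i j : Fin s, i < j → st i + (ws i).length ≤ st j

namespace Stmt13Aux

open scoped Classical

/-- Occurrence of the two-block multipattern τ-ρ. -/
def Contains2 (τ ρ σ : List ℕ) : Prop :=
  ∃ a b, WordIsoAt τ σ a ∧ WordIsoAt ρ σ b ∧ a + τ.length ≤ b

lemma getD_append_left {x y : List ℕ} {p : ℕ} (h : p < x.length) :
    (x ++ y).getD p 0 = x.getD p 0 := by
  simp [List.getD_eq_getElem?_getD, List.getElem?_append, h]

lemma getD_append_right (x y : List ℕ) (p : ℕ) :
    (x ++ y).getD (x.length + p) 0 = y.getD p 0 := by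
  simp [List.getD_eq_getElem?_getD, List.getElem?_append_right (Nat.le_add_right x.length p)]

lemma getD_drop (σ : List ℕ) (c p : ℕ) : (σ.drop c).getD p 0 = σ.getD (c + p) 0 := by
  simp [List.getD_eq_getElem?_getD, List.getElem?_drop]

lemma getD_take {σ : List ℕ} {c p : ℕ} (h : p < c) : (σ.take c).getD p 0 = σ.getD p 0 := by
  simp [List.getD_eq_getElem?_getD, List.getElem?_take, h]

lemma wia_append_right {w y : List ℕ} {i : ℕ} (h : WordIsoAt w y i) (z : List ℕ) :
    WordIsoAt w (y ++ z) i := by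
  obtain ⟨hlen, hiso⟩ := h
  refine ⟨by simp only [List.length_append]; omega, fun s t hs ht => ?_⟩
  rw [getD_append_left (by omega), getD_append_left (by omega)]
  exact hiso s t hs ht

lemma wia_shift {w y : List ℕ} (x : List ℕ) {i : ℕ} :
    WordIsoAt w (x ++ y) (x.length + i) ↔ WordIsoAt w y i := by
  constructor
  · rintro ⟨hlen, hiso⟩
    refine ⟨by simp only [List.length_append] at hlen; omega, fun s t hs ht => ?_⟩
    have := hiso s t hs ht
    rwa [Nat.add_assoc, Nat.add_assoc, getD_append_right, getD_append_right] at this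
  · rintro ⟨hlen, hiso⟩
    refine ⟨by simp only [List.length_append]; omega, fun s t hs ht => ?_⟩
    rw [Nat.add_assoc, Nat.add_assoc, getD_append_right, getD_append_right]
    exact hiso s t hs ht

lemma wia_append_left {w y z : List ℕ} {i : ℕ} (hb : i + w.length ≤ y.length) :
    WordIsoAt w (y ++ z) i ↔ WordIsoAt w y i := by
  constructor
  · rintro ⟨hlen, hiso⟩
    refine ⟨hb, fun s t hs ht => ?_⟩
    have := hiso s t hs ht
    rwa [getD_append_left (by omega), getD_append_left (by omega)] at this
  · exact fun h => wia_append_right h z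

lemma wia_take {w σ : List ℕ} {c i : ℕ} (hb : i + w.length ≤ c) :
    WordIsoAt w (σ.take c) i ↔ WordIsoAt w σ i := by
  constructor
  · rintro ⟨hlen, hiso⟩
    rw [List.length_take] at hlen
    refine ⟨by omega, fun s t hs ht => ?_⟩
    have := hiso s t hs ht
    rwa [getD_take (by omega), getD_take (by omega)] at this
  · rintro ⟨hlen, hiso⟩
    refine ⟨by rw [List.length_take]; omega, fun s t hs ht => ?_⟩
    rw [getD_take (by omega), getD_take (by omega)]
    exact hiso s t hs ht

lemma wia_drop_of {w σ : List ℕ} {c i : ℕ} (h : WordIsoAt w σ (c + i)) :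
    WordIsoAt w (σ.drop c) i := by
  obtain ⟨hlen, hiso⟩ := h
  refine ⟨by rw [List.length_drop]; omega, fun s t hs ht => ?_⟩
  rw [getD_drop, getD_drop, ← Nat.add_assoc, ← Nat.add_assoc]
  exact hiso s t hs ht

/-- The block-swapping map. -/
noncomputable def swapF (τ ρ σ : List ℕ) : List ℕ :=
  if hτ : ∃ i, WordIsoAt τ σ i then
    if h2 : ∃ j, WordIsoAt ρ (σ.drop (Nat.find hτ + τ.length)) j then
      (σ.drop (Nat.find hτ + τ.length)).take (Nat.find h2 + ρ.length) ++
        σ.take (Nat.find hτ + τ.length) ++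
        (σ.drop (Nat.find hτ + τ.length)).drop (Nat.find h2 + ρ.length)
    else σ
  else σ

lemma contains2_hyps {τ ρ σ : List ℕ} (h : Contains2 τ ρ σ) :
    ∃ hτ : ∃ i, WordIsoAt τ σ i,
      ∃ j, WordIsoAt ρ (σ.drop (Nat.find hτ + τ.length)) j := by
  obtain ⟨a, b, ha, hb, hab⟩ := h
  have hτ : ∃ i, WordIsoAt τ σ i := ⟨a, ha⟩
  refine ⟨hτ, b - (Nat.find hτ + τ.length), wia_drop_of ?_⟩
  have hle : Nat.find hτ ≤ a := Nat.find_min' _ ha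
  have : Nat.find hτ + τ.length + (b - (Nat.find hτ + τ.length)) = b := by omega
  rw [this]; exact hb

lemma swapF_eq_of {τ ρ σ : List ℕ} {a b : ℕ}
    (ha : WordIsoAt τ σ a) (hamin : ∀ j < a, ¬ WordIsoAt τ σ j)
    (hb : WordIsoAt ρ (σ.drop (a + τ.length)) b)
    (hbmin : ∀ j < b, ¬ WordIsoAt ρ (σ.drop (a + τ.length)) j) :
    swapF τ ρ σ =
      (σ.drop (a + τ.length)).take (b + ρ.length) ++ σ.take (a + τ.length) ++
        (σ.drop (a + τ.length)).drop (b + ρ.length) := by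
  have hτ : ∃ i, WordIsoAt τ σ i := ⟨a, ha⟩
  have hfa : Nat.find hτ = a := by
    rw [Nat.find_eq_iff]; exact ⟨ha, hamin⟩
  have h2 : ∃ j, WordIsoAt ρ (σ.drop (Nat.find hτ + τ.length)) j := by
    rw [hfa]; exact ⟨b, hb⟩
  have hfb : Nat.find h2 = b := by
    rw [Nat.find_eq_iff]
    refine ⟨?_, fun j hj => ?_⟩
    · rw [hfa]; exact hb
    · rw [hfa]; exact hbmin j hj
  rw [swapF, dif_pos hτ, dif_pos h2, hfb, hfa]

lemma swapF_main {τ ρ σ : List ℕ} (h : Contains2 τ ρ σ) :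
    Contains2 ρ τ (swapF τ ρ σ) ∧ (swapF τ ρ σ).Perm σ ∧
      swapF ρ τ (swapF τ ρ σ) = σ := by
  obtain ⟨hτ, h2⟩ := contains2_hyps h
  set a := Nat.find hτ with ha_def
  have ha : WordIsoAt τ σ a := Nat.find_spec hτ
  set D := σ.drop (a + τ.length) with hD_def
  set b := Nat.find h2 with hb_def
  have hb : WordIsoAt ρ D b := Nat.find_spec h2
  set P := σ.take (a + τ.length) with hP_def
  set Q := D.take (b + ρ.length) with hQ_def
  set R := D.drop (b + ρ.length) with hR_def
  have hak : a + τ.length ≤ σ.length := ha.1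
  have hbl : b + ρ.length ≤ D.length := hb.1
  have hPlen : P.length = a + τ.length := by rw [hP_def, List.length_take]; omega
  have hQlen : Q.length = b + ρ.length := by rw [hQ_def, List.length_take]; omega
  have hswap : swapF τ ρ σ = Q ++ P ++ R := by
    rw [swapF, dif_pos hτ, dif_pos h2]
  have hassoc : Q ++ P ++ R = Q ++ (P ++ R) := List.append_assoc Q P R
  -- occurrences in σ' = Q ++ P ++ R
  have hQb : WordIsoAt ρ Q b := (wia_take le_rfl).mpr hb
  have hσ'ρ : WordIsoAt ρ (Q ++ P ++ R) b := by
    rw [hassoc]; exact wia_append_right hQb (P ++ R)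
  have hPa : WordIsoAt τ P a := (wia_take le_rfl).mpr ha
  have hPRa : WordIsoAt τ (P ++ R) a := wia_append_right hPa R
  have hσ'τ : WordIsoAt τ (Q ++ P ++ R) (b + ρ.length + a) := by
    rw [hassoc]
    have := (wia_shift (w := τ) (y := P ++ R) Q (i := a)).mpr hPRa
    rwa [hQlen] at this
  have hcont : Contains2 ρ τ (Q ++ P ++ R) := ⟨b, b + ρ.length + a, hσ'ρ, hσ'τ, by omega⟩
  -- σ = P ++ (Q ++ R)
  have hσ : σ = P ++ (Q ++ R) := by
    rw [hP_def, hQ_def, hR_def, List.take_append_drop, hD_def, List.take_append_drop]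
  have hperm : (Q ++ P ++ R).Perm σ := by
    rw [hσ, ← List.append_assoc]
    exact (List.perm_append_comm (l₁ := Q) (l₂ := P)).append_right R
  -- inverse computation
  have hmin1 : ∀ j < b, ¬ WordIsoAt ρ (Q ++ P ++ R) j := by
    intro j hj hcon
    rw [hassoc] at hcon
    have hcon2 : WordIsoAt ρ Q j :=
      (wia_append_left (by omega : j + ρ.length ≤ Q.length)).mp hcon
    have hcon3 : WordIsoAt ρ D j := (wia_take (by omega : j + ρ.length ≤ b + ρ.length)).mp hcon2
    exact Nat.find_min h2 hj hcon3
  have hdrop : (Q ++ P ++ R).drop (b + ρ.length) = P ++ R := by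
    rw [hassoc]
    exact List.drop_left' hQlen
  have hmin2 : ∀ j < a, ¬ WordIsoAt τ ((Q ++ P ++ R).drop (b + ρ.length)) j := by
    intro j hj hcon
    rw [hdrop] at hcon
    have hcon2 : WordIsoAt τ P j :=
      (wia_append_left (by omega : j + τ.length ≤ P.length)).mp hcon
    have hcon3 : WordIsoAt τ σ j :=
      (wia_take (by omega : j + τ.length ≤ a + τ.length)).mp hcon2
    exact Nat.find_min hτ hj hcon3
  have hb0 : WordIsoAt τ ((Q ++ P ++ R).drop (b + ρ.length)) a := by rw [hdrop]; exact hPRa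
  have hinv : swapF ρ τ (Q ++ P ++ R) = σ := by
    rw [swapF_eq_of hσ'ρ hmin1 hb0 hmin2, hdrop]
    have htake : (Q ++ P ++ R).take (b + ρ.length) = Q := by
      rw [hassoc]
      exact List.take_left' hQlen
    rw [htake, List.take_left' hPlen, List.drop_left' hPlen, hσ, List.append_assoc]
  rw [hswap]
  exact ⟨hcont, hperm, hinv⟩

lemma multiOccurs_pair {τ ρ σ : List ℕ} : MultiOccurs ![τ, ρ] σ ↔ Contains2 τ ρ σ := by
  constructor
  · rintro ⟨st, h1, h2⟩
    exact ⟨st 0, st 1, by simpa using h1 0, by simpa using h1 1,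
      by simpa using h2 0 1 (by decide)⟩
  · rintro ⟨a, b, ha, hb, hab⟩
    refine ⟨![a, b], fun i => ?_, fun i j hij => ?_⟩
    · fin_cases i <;> simpa
    · fin_cases i <;> fin_cases j
      · exact absurd hij (by decide)
      · simpa using hab
      · exact absurd hij (by decide)
      · exact absurd hij (by decide)

lemma isCompOf_finite (A : Finset ℕ) (n m : ℕ) :
    {σ : List ℕ | IsCompOf A n m σ}.Finite := by
  have h1 : {l : List ↥A | l.length = m}.Finite := List.finite_length_eq _ m
  apply Set.Finite.subset (h1.image (List.map Subtype.val))
  rintro σ ⟨hmem, _, hlen⟩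
  refine ⟨σ.attach.map (fun x => (⟨x.1, hmem x.1 x.2⟩ : ↥A)), by simp [hlen], ?_⟩
  simp [List.map_map, Function.comp_def]

lemma isCompOf_perm {A : Finset ℕ} {n m : ℕ} {σ σ' : List ℕ} (hp : σ.Perm σ')
    (h : IsCompOf A n m σ) : IsCompOf A n m σ' := by
  obtain ⟨h1, h2, h3⟩ := h
  exact ⟨fun x hx => h1 x (hp.mem_iff.mpr hx), by rw [← hp.sum_eq]; exact h2,
    by rw [← hp.length_eq]; exact h3⟩

lemma ncard_contains_eq (τ ρ : List ℕ) (A : Finset ℕ) (n m : ℕ) :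
    {σ : List ℕ | IsCompOf A n m σ ∧ Contains2 τ ρ σ}.ncard
      = {σ : List ℕ | IsCompOf A n m σ ∧ Contains2 ρ τ σ}.ncard := by
  set C₁ := {σ : List ℕ | IsCompOf A n m σ ∧ Contains2 τ ρ σ} with hC₁
  set C₂ := {σ : List ℕ | IsCompOf A n m σ ∧ Contains2 ρ τ σ} with hC₂
  have hmap1 : Set.MapsTo (swapF τ ρ) C₁ C₂ := by
    rintro σ ⟨hc, ho⟩
    obtain ⟨h1, h2, _⟩ := swapF_main ho
    exact ⟨isCompOf_perm h2.symm hc, h1⟩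
  have hmap2 : Set.MapsTo (swapF ρ τ) C₂ C₁ := by
    rintro σ ⟨hc, ho⟩
    obtain ⟨h1, h2, _⟩ := swapF_main ho
    exact ⟨isCompOf_perm h2.symm hc, h1⟩
  have hinv : Set.InvOn (swapF ρ τ) (swapF τ ρ) C₁ C₂ := by
    constructor
    · rintro σ ⟨_, ho⟩
      exact (swapF_main ho).2.2
    · rintro σ ⟨_, ho⟩
      exact (swapF_main ho).2.2
  have hbij : Set.BijOn (swapF τ ρ) C₁ C₂ := hinv.bijOn hmap1 hmap2
  rw [← hbij.image_eq, Set.ncard_image_of_injOn hbij.injOn]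

end Stmt13Aux

open Stmt13Aux in
theorem stmt13 (τ₁ τ₂ : List ℕ) (hτ₁ : τ₁ ≠ []) (hτ₂ : τ₂ ≠ [])
    (hτ₁pos : ∀ x ∈ τ₁, 0 < x) (hτ₂pos : ∀ x ∈ τ₂, 0 < x) :
    ∀ (A : Finset ℕ), (∀ a ∈ A, 0 < a) → ∀ n m : ℕ,
      Set.ncard {σ : List ℕ | IsCompOf A n m σ ∧ ¬ MultiOccurs ![τ₁, τ₂] σ}
        = Set.ncard {σ : List ℕ | IsCompOf A n m σ ∧ ¬ MultiOccurs ![τ₂, τ₁] σ} := by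
  intro A hA n m
  have hfin : {σ : List ℕ | IsCompOf A n m σ}.Finite := isCompOf_finite A n m
  have e1 : {σ : List ℕ | IsCompOf A n m σ ∧ ¬ MultiOccurs ![τ₁, τ₂] σ}
      = {σ : List ℕ | IsCompOf A n m σ}
        \ {σ : List ℕ | IsCompOf A n m σ ∧ Contains2 τ₁ τ₂ σ} := by
    ext σ
    simp only [Set.mem_setOf_eq, Set.mem_diff, multiOccurs_pair]
    tauto
  have e2 : {σ : List ℕ | IsCompOf A n m σ ∧ ¬ MultiOccurs ![τ₂, τ₁] σ}
      = {σ : List ℕ | IsCompOf A n m σ}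
        \ {σ : List ℕ | IsCompOf A n m σ ∧ Contains2 τ₂ τ₁ σ} := by
    ext σ
    simp only [Set.mem_setOf_eq, Set.mem_diff, multiOccurs_pair]
    tauto
  have hsub1 : {σ : List ℕ | IsCompOf A n m σ ∧ Contains2 τ₁ τ₂ σ}
      ⊆ {σ : List ℕ | IsCompOf A n m σ} := fun σ h => h.1
  have hsub2 : {σ : List ℕ | IsCompOf A n m σ ∧ Contains2 τ₂ τ₁ σ}
      ⊆ {σ : List ℕ | IsCompOf A n m σ} := fun σ h => h.1
  rw [e1, e2, Set.ncard_diff hsub1 (hfin.subset hsub1),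
    Set.ncard_diff hsub2 (hfin.subset hsub2), ncard_contains_eq τ₁ τ₂ A n m]
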